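/- Well-typedness of the shift encoding in the fine-grained λF: if Γ, k:(τ →p α) ⊢ e : γ @ μi γ′ / • β with id-cont-type γ μi γ′, then for every trail type μα, Γ ⊢ F k′. e[k := λx. ⟨k′ x⟩] : τ @ μα α / μα β, where k′ is fresh. -/
import Mathlib


namespace LambdaF

/-! ## Syntax and operational semantics of λF -/

/-- λF expressions.  A constant `const ι n` is the `n`-th constant of base type `ι`. -/
inductive Tm : Type where
  | const : Nat → Nat → Tm
  | var : String → Tm
  | lam : String → Tm → Tm
  | app : Tm → Tm → Tm
  | control : String → Tm → Tm
  | prompt : Tm → Tm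

/-- Values `v ::= c | x | λx.e`. -/
inductive IsVal : Tm → Prop where
  | const (ι n : Nat) : IsVal (.const ι n)
  | var (x : String) : IsVal (.var x)
  | lam (x : String) (e : Tm) : IsVal (.lam x e)

/-- Substitution `e[x := v]`. -/
def subst : Tm → String → Tm → Tm
  | .const ι n, _, _ => .const ι n
  | .var y, x, v => if y = x then v else .var y
  | .lam y e, x, v => if y = x then .lam y e else .lam y (subst e x v)
  | .app e₁ e₂, x, v => .app (subst e₁ x v) (subst e₂ x v)
  | .control k e, x, v => if k = x then .control k e else .control k (subst e x v)
  | .prompt e, x, v => .prompt (subst e x v)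

/-- All variable names occurring in a term (free or bound). -/
def Tm.vars : Tm → List String
  | .const _ _ => []
  | .var y => [y]
  | .lam y e => y :: e.vars
  | .app e₁ e₂ => e₁.vars ++ e₂.vars
  | .control k e => k :: e.vars
  | .prompt e => e.vars

/-- Pure evaluation contexts `F ::= [] | F e | v F`. -/
inductive PCtx : Type where
  | hole : PCtx
  | appL : PCtx → Tm → PCtx
  | appR : Tm → PCtx → PCtx

/-- Plugging an expression into a pure context. -/
def PCtx.plug : PCtx → Tm → Tm
  | .hole, e => e
  | .appL P e₂, e => .app (P.plug e) e₂
  | .appR v P, e => .app v (P.plug e)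

/-- Well-formedness of pure contexts: in `v F`, `v` is a value. -/
inductive PCtx.Wf : PCtx → Prop where
  | hole : PCtx.Wf .hole
  | appL (P : PCtx) (e : Tm) : PCtx.Wf P → PCtx.Wf (.appL P e)
  | appR (v : Tm) (P : PCtx) : IsVal v → PCtx.Wf P → PCtx.Wf (.appR v P)

/-- All variable names occurring in a pure context. -/
def PCtx.vars : PCtx → List String
  | .hole => []
  | .appL P e => P.vars ++ e.vars
  | .appR v P => v.vars ++ P.vars

/-- General evaluation contexts `E ::= [] | E e | v E | ⟨E⟩`. -/
inductive ECtx : Type where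
  | hole : ECtx
  | appL : ECtx → Tm → ECtx
  | appR : Tm → ECtx → ECtx
  | prompt : ECtx → ECtx

/-- Plugging an expression into a general context. -/
def ECtx.plug : ECtx → Tm → Tm
  | .hole, e => e
  | .appL E e₂, e => .app (E.plug e) e₂
  | .appR v E, e => .app v (E.plug e)
  | .prompt E, e => .prompt (E.plug e)

/-- Well-formedness of general contexts: in `v E`, `v` is a value. -/
inductive ECtx.Wf : ECtx → Prop where
  | hole : ECtx.Wf .hole
  | appL (E : ECtx) (e : Tm) : ECtx.Wf E → ECtx.Wf (.appL E e)
  | appR (v : Tm) (E : ECtx) : IsVal v → ECtx.Wf E → ECtx.Wf (.appR v E)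
  | prompt (E : ECtx) : ECtx.Wf E → ECtx.Wf (.prompt E)

/-- Reduction of λF. -/
inductive Step : Tm → Tm → Prop where
  | beta (E : ECtx) (x : String) (e v : Tm) :
      E.Wf → IsVal v →
      Step (E.plug (.app (.lam x e) v)) (E.plug (subst e x v))
  | control (E : ECtx) (P : PCtx) (k : String) (e : Tm) (x : String) :
      E.Wf → P.Wf → x ∉ P.vars →
      Step (E.plug (.prompt (P.plug (.control k e))))
           (E.plug (.prompt (subst e k (.lam x (P.plug (.var x))))))
  | prompt (E : ECtx) (v : Tm) :
      E.Wf → IsVal v →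
      Step (E.plug (.prompt v)) (E.plug v)

/-- Reflexive transitive closure of reduction. -/
def Steps : Tm → Tm → Prop := Relation.ReflTransGen Step

/-! ## Types and the fine-grained type system of λF -/

mutual
/-- Fine-grained λF expression types
    `τ ::= ι | (τ₁ → τ₂ @ μα α μβ β) | (τ₁ →p τ₂)`. -/
inductive FTy : Type where
  | base : Nat → FTy
  | arrow : FTy → FTy → FTr → FTy → FTr → FTy → FTy
  | parrow : FTy → FTy → FTy

/-- Fine-grained λF trail types `μ ::= • | (τ ⇒⟨μ⟩ τ′)`. -/
inductive FTr : Type where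
  | empty : FTr
  | cons : FTy → FTr → FTy → FTr
end

/-- `id-cont-type τ μ τ′`. -/
def FIdContType : FTy → FTr → FTy → Prop
  | τ, .empty, τ' => τ = τ'
  | τ, .cons τ₁ μ₁ τ₁', τ' => τ = τ₁ ∧ τ' = τ₁' ∧ μ₁ = .empty

/-- `compatible μ₁ μ₂ μ₃`. -/
inductive FCompatible : FTr → FTr → FTr → Prop where
  | empty (μ : FTr) : FCompatible .empty μ μ
  | consEmpty (τ₁ : FTy) (μ₁ : FTr) (τ₁' : FTy) :
      FCompatible (.cons τ₁ μ₁ τ₁') .empty (.cons τ₁ μ₁ τ₁')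
  | consCons (τ₁ : FTy) (μ₁ : FTr) (τ₁' : FTy) (μ₂ μ₃ : FTr) :
      FCompatible μ₂ μ₃ μ₁ →
      FCompatible (.cons τ₁ μ₁ τ₁') μ₂ (.cons τ₁ μ₃ τ₁')

/-- Fine-grained typing contexts. -/
abbrev FCtx := List (String × FTy)

/-- Context lookup (with shadowing). -/
inductive FLookup : FCtx → String → FTy → Prop where
  | here (Γ : FCtx) (x : String) (τ : FTy) : FLookup ((x, τ) :: Γ) x τ
  | there (Γ : FCtx) (x y : String) (τ τ' : FTy) :
      x ≠ y → FLookup Γ x τ → FLookup ((y, τ') :: Γ) x τ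

mutual
/-- The pure judgment `Γ ⊢p e : τ` of the fine-grained λF. -/
inductive HasTypeP : FCtx → Tm → FTy → Prop where
  | const (Γ : FCtx) (ι n : Nat) : HasTypeP Γ (.const ι n) (.base ι)
  | var (Γ : FCtx) (x : String) (τ : FTy) :
      FLookup Γ x τ → HasTypeP Γ (.var x) τ
  | pabs (Γ : FCtx) (x : String) (e : Tm) (τ₁ τ₂ : FTy) :
      HasTypeP ((x, τ₁) :: Γ) e τ₂ →
      HasTypeP Γ (.lam x e) (.parrow τ₁ τ₂)
  | iabs (Γ : FCtx) (x : String) (e : Tm) (τ₁ τ₂ : FTy) (μα : FTr) (α : FTy)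
      (μβ : FTr) (β : FTy) :
      HasTypeI ((x, τ₁) :: Γ) e τ₂ μα α μβ β →
      HasTypeP Γ (.lam x e) (.arrow τ₁ τ₂ μα α μβ β)
  | papp (Γ : FCtx) (e₁ e₂ : Tm) (τ₁ τ₂ : FTy) :
      HasTypeP Γ e₁ (.parrow τ₁ τ₂) → HasTypeP Γ e₂ τ₁ →
      HasTypeP Γ (.app e₁ e₂) τ₂
  | pprompt (Γ : FCtx) (e : Tm) (τ : FTy) :
      HasTypeP Γ e τ → HasTypeP Γ (.prompt e) τ
  | iprompt (Γ : FCtx) (e : Tm) (β : FTy) (μi : FTr) (β' τ : FTy) :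
      HasTypeI Γ e β μi β' .empty τ →
      FIdContType β μi β' →
      HasTypeP Γ (.prompt e) τ

/-- The impure judgment `Γ ⊢ e : τ @ μα α / μβ β` of the fine-grained λF. -/
inductive HasTypeI : FCtx → Tm → FTy → FTr → FTy → FTr → FTy → Prop where
  | piapp (Γ : FCtx) (e₁ e₂ : Tm) (τ₁ τ₂ : FTy) (μα : FTr) (α : FTy)
      (μβ : FTr) (β : FTy) (μγ : FTr) (γ : FTy) :
      HasTypeI Γ e₁ (.parrow τ₁ τ₂) μα α μβ β →
      HasTypeI Γ e₂ τ₁ μγ γ μα α →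
      HasTypeI Γ (.app e₁ e₂) τ₂ μγ γ μβ β
  | iapp (Γ : FCtx) (e₁ e₂ : Tm) (τ₁ τ₂ : FTy) (μα : FTr) (α : FTy)
      (μβ : FTr) (β : FTy) (μγ : FTr) (γ : FTy) (μδ : FTr) (δ : FTy) :
      HasTypeI Γ e₁ (.arrow τ₁ τ₂ μα α μβ β) μγ γ μδ δ →
      HasTypeI Γ e₂ τ₁ μβ β μγ γ →
      HasTypeI Γ (.app e₁ e₂) τ₂ μα α μδ δ
  | pcontrol (Γ : FCtx) (k : String) (e : Tm) (τ α γ : FTy) (μi : FTr)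
      (γ' β : FTy) (μα : FTr) :
      HasTypeI ((k, .parrow τ α) :: Γ) e γ μi γ' .empty β →
      FIdContType γ μi γ' →
      HasTypeI Γ (.control k e) τ μα α μα β
  | icontrol (Γ : FCtx) (k : String) (e : Tm) (τ τ₁ : FTy) (μ₁ : FTr)
      (τ₁' : FTy) (μ₂ μ₀ : FTr) (α β γ : FTy) (μi : FTr) (γ' : FTy) (μα μβ : FTr) :
      HasTypeI ((k, .arrow τ τ₁ μ₁ τ₁' μ₂ α) :: Γ) e γ μi γ' .empty β →
      FIdContType γ μi γ' →
      FCompatible (.cons τ₁ μ₁ τ₁') μ₂ μ₀ →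
      FCompatible μβ μ₀ μα →
      HasTypeI Γ (.control k e) τ μα α μβ β
  | exp (Γ : FCtx) (e : Tm) (τ : FTy) (μα : FTr) (α : FTy) :
      HasTypeP Γ e τ →
      HasTypeI Γ e τ μα α μα α
end

theorem lookup_remove : ∀ {Γ₁ : FCtx} {k : String} {σ : FTy} {Δ : FCtx} {z : String} {τ : FTy},
    FLookup (Γ₁ ++ (k, σ) :: Δ) z τ → (z = k → k ∈ Γ₁.map Prod.fst) → FLookup (Γ₁ ++ Δ) z τ := by
  intro Γ₁
  induction Γ₁ with
  | nil =>
    intro k σ Δ z τ h hz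
    cases h with
    | here => simp at hz
    | there _ _ _ _ _ hne hl => exact hl
  | cons a Γ₁ ih =>
    intro k σ Δ z τ h hz
    cases h with
    | here => exact .here _ _ _
    | there _ _ _ _ _ hne hl =>
      refine .there _ _ _ _ _ hne (ih hl ?_)
      intro hzk
      simp only [List.map_cons, List.mem_cons] at hz
      rcases hz hzk with h1 | h1
      · exact absurd (hzk.trans h1) hne
      · exact h1

theorem lookup_mid_eq : ∀ {Γ₁ : FCtx} {k : String} {σ : FTy} {Δ : FCtx} {τ : FTy},
    FLookup (Γ₁ ++ (k, σ) :: Δ) k τ → k ∉ Γ₁.map Prod.fst → τ = σ := by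
  intro Γ₁
  induction Γ₁ with
  | nil =>
    intro k σ Δ τ h _
    cases h with
    | here => rfl
    | there _ _ _ _ _ hne _ => exact absurd rfl hne
  | cons a Γ₁ ih =>
    intro k σ Δ τ h hm
    cases h with
    | here => simp at hm
    | there _ _ _ _ _ hne hl =>
      refine ih hl ?_
      intro h1; exact hm (by simp [h1])

theorem transfer_P {Γ : FCtx} {e : Tm} {τ : FTy} (h : HasTypeP Γ e τ) :
    ∀ Γ' : FCtx, (∀ z τ', z ∈ e.vars → FLookup Γ z τ' → FLookup Γ' z τ') → HasTypeP Γ' e τ := by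
  induction h using HasTypeP.rec
    (motive_2 := fun Γ e τ μα α μβ β _ =>
      ∀ Γ' : FCtx, (∀ z τ', z ∈ e.vars → FLookup Γ z τ' → FLookup Γ' z τ') →
        HasTypeI Γ' e τ μα α μβ β) with
  | const Γ ι n =>
    first | intro Γ' H | rename_i Γ' H
    exact .const _ _ _
  | var Γ x τ hl =>
    first | intro Γ' H | rename_i Γ' H
    exact .var _ _ _ (H x τ (by simp [Tm.vars]) hl)
  | pabs Γ x e τ₁ τ₂ _ ih =>
    first | intro Γ' H | rename_i Γ' H
    refine .pabs _ _ _ _ _ (ih _ ?_)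
    intro z τ' hz hl
    cases hl with
    | here => exact .here _ _ _
    | there _ _ _ _ _ hne hl' =>
      exact .there _ _ _ _ _ hne (H z τ' (by simp [Tm.vars]; right; exact hz) hl')
  | iabs Γ x e τ₁ τ₂ μα α μβ β _ ih =>
    first | intro Γ' H | rename_i Γ' H
    refine .iabs _ _ _ _ _ _ _ _ _ (ih _ ?_)
    intro z τ' hz hl
    cases hl with
    | here => exact .here _ _ _
    | there _ _ _ _ _ hne hl' =>
      exact .there _ _ _ _ _ hne (H z τ' (by simp [Tm.vars]; right; exact hz) hl')
  | papp Γ e₁ e₂ τ₁ τ₂ _ _ ih₁ ih₂ =>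
    first | intro Γ' H | rename_i Γ' H
    exact .papp _ _ _ _ _
      (ih₁ _ fun z τ' hz hl => H z τ' (by simp [Tm.vars]; left; exact hz) hl)
      (ih₂ _ fun z τ' hz hl => H z τ' (by simp [Tm.vars]; right; exact hz) hl)
  | pprompt Γ e τ _ ih =>
    first | intro Γ' H | rename_i Γ' H
    exact .pprompt _ _ _ (ih _ fun z τ' hz hl => H z τ' (by simpa [Tm.vars] using hz) hl)
  | iprompt Γ e β μi β' τ _ hid ih =>
    first | intro Γ' H | rename_i Γ' H
    exact .iprompt _ _ _ _ _ _ (ih _ fun z τ' hz hl => H z τ' (by simpa [Tm.vars] using hz) hl) hid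
  | piapp Γ e₁ e₂ τ₁ τ₂ μα α μβ β μγ γ _ _ ih₁ ih₂ =>
    first | intro Γ' H | rename_i Γ' H
    exact .piapp _ _ _ _ _ _ _ _ _ _ _
      (ih₁ _ fun z τ' hz hl => H z τ' (by simp [Tm.vars]; left; exact hz) hl)
      (ih₂ _ fun z τ' hz hl => H z τ' (by simp [Tm.vars]; right; exact hz) hl)
  | iapp Γ e₁ e₂ τ₁ τ₂ μα α μβ β μγ γ μδ δ _ _ ih₁ ih₂ =>
    first | intro Γ' H | rename_i Γ' H
    exact .iapp _ _ _ _ _ _ _ _ _ _ _ _ _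
      (ih₁ _ fun z τ' hz hl => H z τ' (by simp [Tm.vars]; left; exact hz) hl)
      (ih₂ _ fun z τ' hz hl => H z τ' (by simp [Tm.vars]; right; exact hz) hl)
  | pcontrol Γ k e τ α γ μi γ' β μα _ hid ih =>
    first | intro Γ' H | rename_i Γ' H
    refine .pcontrol _ _ _ _ _ _ _ _ _ _ (ih _ ?_) hid
    intro z τ' hz hl
    cases hl with
    | here => exact .here _ _ _
    | there _ _ _ _ _ hne hl' =>
      exact .there _ _ _ _ _ hne (H z τ' (by simp [Tm.vars]; right; exact hz) hl')
  | icontrol Γ k e τ τ₁ μ₁ τ₁' μ₂ μ₀ α β γ μi γ' μα μβ _ hid hc₁ hc₂ ih =>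
    first | intro Γ' H | rename_i Γ' H
    refine .icontrol _ _ _ _ _ _ _ _ _ _ _ _ _ _ _ _ (ih _ ?_) hid hc₁ hc₂
    intro z τ' hz hl
    cases hl with
    | here => exact .here _ _ _
    | there _ _ _ _ _ hne hl' =>
      exact .there _ _ _ _ _ hne (H z τ' (by simp [Tm.vars]; right; exact hz) hl')
  | exp Γ e τ μα α _ ih =>
    first | intro Γ' H | rename_i Γ' H
    exact .exp _ _ _ _ _ (ih _ H)

theorem transfer_I {Γ : FCtx} {e : Tm} {τ : FTy} {μα : FTr} {α : FTy} {μβ : FTr} {β : FTy}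
    (h : HasTypeI Γ e τ μα α μβ β) :
    ∀ Γ' : FCtx, (∀ z τ', z ∈ e.vars → FLookup Γ z τ' → FLookup Γ' z τ') →
      HasTypeI Γ' e τ μα α μβ β := by
  induction h using HasTypeI.rec
    (motive_1 := fun Γ e τ _ =>
      ∀ Γ' : FCtx, (∀ z τ', z ∈ e.vars → FLookup Γ z τ' → FLookup Γ' z τ') →
        HasTypeP Γ' e τ) with
  | const Γ ι n =>
    first | intro Γ' H | rename_i Γ' H
    exact .const _ _ _
  | var Γ x τ hl =>
    first | intro Γ' H | rename_i Γ' H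
    exact .var _ _ _ (H x τ (by simp [Tm.vars]) hl)
  | pabs Γ x e τ₁ τ₂ _ ih =>
    first | intro Γ' H | rename_i Γ' H
    refine .pabs _ _ _ _ _ (ih _ ?_)
    intro z τ' hz hl
    cases hl with
    | here => exact .here _ _ _
    | there _ _ _ _ _ hne hl' =>
      exact .there _ _ _ _ _ hne (H z τ' (by simp [Tm.vars]; right; exact hz) hl')
  | iabs Γ x e τ₁ τ₂ μα α μβ β _ ih =>
    first | intro Γ' H | rename_i Γ' H
    refine .iabs _ _ _ _ _ _ _ _ _ (ih _ ?_)
    intro z τ' hz hl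
    cases hl with
    | here => exact .here _ _ _
    | there _ _ _ _ _ hne hl' =>
      exact .there _ _ _ _ _ hne (H z τ' (by simp [Tm.vars]; right; exact hz) hl')
  | papp Γ e₁ e₂ τ₁ τ₂ _ _ ih₁ ih₂ =>
    first | intro Γ' H | rename_i Γ' H
    exact .papp _ _ _ _ _
      (ih₁ _ fun z τ' hz hl => H z τ' (by simp [Tm.vars]; left; exact hz) hl)
      (ih₂ _ fun z τ' hz hl => H z τ' (by simp [Tm.vars]; right; exact hz) hl)
  | pprompt Γ e τ _ ih =>
    first | intro Γ' H | rename_i Γ' H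
    exact .pprompt _ _ _ (ih _ fun z τ' hz hl => H z τ' (by simpa [Tm.vars] using hz) hl)
  | iprompt Γ e β μi β' τ _ hid ih =>
    first | intro Γ' H | rename_i Γ' H
    exact .iprompt _ _ _ _ _ _ (ih _ fun z τ' hz hl => H z τ' (by simpa [Tm.vars] using hz) hl) hid
  | piapp Γ e₁ e₂ τ₁ τ₂ μα α μβ β μγ γ _ _ ih₁ ih₂ =>
    first | intro Γ' H | rename_i Γ' H
    exact .piapp _ _ _ _ _ _ _ _ _ _ _
      (ih₁ _ fun z τ' hz hl => H z τ' (by simp [Tm.vars]; left; exact hz) hl)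
      (ih₂ _ fun z τ' hz hl => H z τ' (by simp [Tm.vars]; right; exact hz) hl)
  | iapp Γ e₁ e₂ τ₁ τ₂ μα α μβ β μγ γ μδ δ _ _ ih₁ ih₂ =>
    first | intro Γ' H | rename_i Γ' H
    exact .iapp _ _ _ _ _ _ _ _ _ _ _ _ _
      (ih₁ _ fun z τ' hz hl => H z τ' (by simp [Tm.vars]; left; exact hz) hl)
      (ih₂ _ fun z τ' hz hl => H z τ' (by simp [Tm.vars]; right; exact hz) hl)
  | pcontrol Γ k e τ α γ μi γ' β μα _ hid ih =>
    first | intro Γ' H | rename_i Γ' H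
    refine .pcontrol _ _ _ _ _ _ _ _ _ _ (ih _ ?_) hid
    intro z τ' hz hl
    cases hl with
    | here => exact .here _ _ _
    | there _ _ _ _ _ hne hl' =>
      exact .there _ _ _ _ _ hne (H z τ' (by simp [Tm.vars]; right; exact hz) hl')
  | icontrol Γ k e τ τ₁ μ₁ τ₁' μ₂ μ₀ α β γ μi γ' μα μβ _ hid hc₁ hc₂ ih =>
    first | intro Γ' H | rename_i Γ' H
    refine .icontrol _ _ _ _ _ _ _ _ _ _ _ _ _ _ _ _ (ih _ ?_) hid hc₁ hc₂
    intro z τ' hz hl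
    cases hl with
    | here => exact .here _ _ _
    | there _ _ _ _ _ hne hl' =>
      exact .there _ _ _ _ _ hne (H z τ' (by simp [Tm.vars]; right; exact hz) hl')
  | exp Γ e τ μα α _ ih =>
    first | intro Γ' H | rename_i Γ' H
    exact .exp _ _ _ _ _ (ih _ H)


theorem subst_I {Γ : FCtx} {e : Tm} {τ : FTy} {μα : FTr} {α : FTy} {μβ : FTr} {β : FTy}
    (h : HasTypeI Γ e τ μα α μβ β) :
    ∀ (Γ₁ Δ : FCtx) (kk : String) (σ : FTy) (v : Tm) (k' : String) (σ' : FTy),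
      Γ = Γ₁ ++ (kk, σ) :: Δ → kk ∉ Γ₁.map Prod.fst →
      (∀ Δ' : FCtx, FLookup Δ' k' σ' → HasTypeP Δ' v σ) →
      FLookup (Γ₁ ++ Δ) k' σ' → k' ∉ e.vars →
      HasTypeI (Γ₁ ++ Δ) (subst e kk v) τ μα α μβ β := by
  induction h using HasTypeI.rec
    (motive_1 := fun Γ e τ _ =>
      ∀ (Γ₁ Δ : FCtx) (kk : String) (σ : FTy) (v : Tm) (k' : String) (σ' : FTy),
        Γ = Γ₁ ++ (kk, σ) :: Δ → kk ∉ Γ₁.map Prod.fst →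
        (∀ Δ' : FCtx, FLookup Δ' k' σ' → HasTypeP Δ' v σ) →
        FLookup (Γ₁ ++ Δ) k' σ' → k' ∉ e.vars →
        HasTypeP (Γ₁ ++ Δ) (subst e kk v) τ) with
  | const Γ ι n =>
    first
    | intro Γ₁ Δ kk σ v k' σ' hΓ hk Hv hlk hnv
    | rename_i Γ₁ Δ kk σ v k' σ' hΓ hk Hv hlk hnv
    subst hΓ
    exact .const _ _ _
  | var Γ z τ hl =>
    first
    | intro Γ₁ Δ kk σ v k' σ' hΓ hk Hv hlk hnv
    | rename_i Γ₁ Δ kk σ v k' σ' hΓ hk Hv hlk hnv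
    subst hΓ
    by_cases hz : z = kk
    · subst hz
      simp only [subst, if_pos rfl]
      have := lookup_mid_eq hl hk
      subst this
      exact Hv _ hlk
    · simp only [subst, if_neg hz]
      exact .var _ _ _ (lookup_remove hl fun h => absurd h hz)
  | pabs Γ z e τ₁ τ₂ hbody ih =>
    first
    | intro Γ₁ Δ kk σ v k' σ' hΓ hk Hv hlk hnv
    | rename_i Γ₁ Δ kk σ v k' σ' hΓ hk Hv hlk hnv
    subst hΓ
    by_cases hzk : z = kk
    · simp only [subst, if_pos hzk]
      refine .pabs _ _ _ _ _ ?_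
      refine transfer_P hbody ((z, τ₁) :: (Γ₁ ++ Δ)) ?_
      intro w τ' _ hl
      exact lookup_remove (Γ₁ := (z, τ₁) :: Γ₁) hl (fun _ => by simp [hzk])
    · simp only [subst, if_neg hzk]
      have hnv' : k' ≠ z ∧ k' ∉ e.vars := by
        simpa [Tm.vars, not_or] using hnv
      refine .pabs _ _ _ _ _ ?_
      exact ih ((z, τ₁) :: Γ₁) Δ kk σ v k' σ' rfl
        (by simp only [List.map_cons, List.mem_cons, not_or]
            exact ⟨fun h => hzk h.symm, hk⟩)
        Hv (.there _ _ _ _ _ hnv'.1 hlk) hnv'.2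
  | iabs Γ z e τ₁ τ₂ μα α μβ β hbody ih =>
    first
    | intro Γ₁ Δ kk σ v k' σ' hΓ hk Hv hlk hnv
    | rename_i Γ₁ Δ kk σ v k' σ' hΓ hk Hv hlk hnv
    subst hΓ
    by_cases hzk : z = kk
    · simp only [subst, if_pos hzk]
      refine .iabs _ _ _ _ _ _ _ _ _ ?_
      refine transfer_I hbody ((z, τ₁) :: (Γ₁ ++ Δ)) ?_
      intro w τ' _ hl
      exact lookup_remove (Γ₁ := (z, τ₁) :: Γ₁) hl (fun _ => by simp [hzk])
    · simp only [subst, if_neg hzk]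
      have hnv' : k' ≠ z ∧ k' ∉ e.vars := by
        simpa [Tm.vars, not_or] using hnv
      refine .iabs _ _ _ _ _ _ _ _ _ ?_
      exact ih ((z, τ₁) :: Γ₁) Δ kk σ v k' σ' rfl
        (by simp only [List.map_cons, List.mem_cons, not_or]
            exact ⟨fun h => hzk h.symm, hk⟩)
        Hv (.there _ _ _ _ _ hnv'.1 hlk) hnv'.2
  | papp Γ e₁ e₂ τ₁ τ₂ h₁ h₂ ih₁ ih₂ =>
    first
    | intro Γ₁ Δ kk σ v k' σ' hΓ hk Hv hlk hnv
    | rename_i Γ₁ Δ kk σ v k' σ' hΓ hk Hv hlk hnv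
    subst hΓ
    have hn : k' ∉ e₁.vars ∧ k' ∉ e₂.vars := by simpa [Tm.vars, not_or] using hnv
    exact .papp _ _ _ _ _ (ih₁ _ _ _ _ _ _ _ rfl hk Hv hlk hn.1)
      (ih₂ _ _ _ _ _ _ _ rfl hk Hv hlk hn.2)
  | pprompt Γ e τ h ih =>
    first
    | intro Γ₁ Δ kk σ v k' σ' hΓ hk Hv hlk hnv
    | rename_i Γ₁ Δ kk σ v k' σ' hΓ hk Hv hlk hnv
    subst hΓ
    exact .pprompt _ _ _ (ih _ _ _ _ _ _ _ rfl hk Hv hlk (by simpa [Tm.vars] using hnv))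
  | iprompt Γ e β μi β' τ h hid ih =>
    first
    | intro Γ₁ Δ kk σ v k' σ' hΓ hk Hv hlk hnv
    | rename_i Γ₁ Δ kk σ v k' σ' hΓ hk Hv hlk hnv
    subst hΓ
    exact .iprompt _ _ _ _ _ _
      (ih _ _ _ _ _ _ _ rfl hk Hv hlk (by simpa [Tm.vars] using hnv)) hid
  | piapp Γ e₁ e₂ τ₁ τ₂ μα α μβ β μγ γ h₁ h₂ ih₁ ih₂ =>
    first
    | intro Γ₁ Δ kk σ v k' σ' hΓ hk Hv hlk hnv
    | rename_i Γ₁ Δ kk σ v k' σ' hΓ hk Hv hlk hnv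
    subst hΓ
    have hn : k' ∉ e₁.vars ∧ k' ∉ e₂.vars := by simpa [Tm.vars, not_or] using hnv
    exact .piapp _ _ _ _ _ _ _ _ _ _ _ (ih₁ _ _ _ _ _ _ _ rfl hk Hv hlk hn.1)
      (ih₂ _ _ _ _ _ _ _ rfl hk Hv hlk hn.2)
  | iapp Γ e₁ e₂ τ₁ τ₂ μα α μβ β μγ γ μδ δ h₁ h₂ ih₁ ih₂ =>
    first
    | intro Γ₁ Δ kk σ v k' σ' hΓ hk Hv hlk hnv
    | rename_i Γ₁ Δ kk σ v k' σ' hΓ hk Hv hlk hnv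
    subst hΓ
    have hn : k' ∉ e₁.vars ∧ k' ∉ e₂.vars := by simpa [Tm.vars, not_or] using hnv
    exact .iapp _ _ _ _ _ _ _ _ _ _ _ _ _ (ih₁ _ _ _ _ _ _ _ rfl hk Hv hlk hn.1)
      (ih₂ _ _ _ _ _ _ _ rfl hk Hv hlk hn.2)
  | pcontrol Γ kc e τ α γ μi γ' β μα hbody hid ih =>
    first
    | intro Γ₁ Δ kk σ v k' σ' hΓ hk Hv hlk hnv
    | rename_i Γ₁ Δ kk σ v k' σ' hΓ hk Hv hlk hnv
    subst hΓ
    by_cases hzk : kc = kk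
    · simp only [subst, if_pos hzk]
      refine .pcontrol _ _ _ _ _ _ _ _ _ _ ?_ hid
      refine transfer_I hbody ((kc, .parrow τ α) :: (Γ₁ ++ Δ)) ?_
      intro w τ' _ hl
      exact lookup_remove (Γ₁ := (kc, .parrow τ α) :: Γ₁) hl (fun _ => by simp [hzk])
    · simp only [subst, if_neg hzk]
      have hnv' : k' ≠ kc ∧ k' ∉ e.vars := by
        simpa [Tm.vars, not_or] using hnv
      refine .pcontrol _ _ _ _ _ _ _ _ _ _ ?_ hid
      exact ih ((kc, .parrow τ α) :: Γ₁) Δ kk σ v k' σ' rfl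
        (by simp only [List.map_cons, List.mem_cons, not_or]
            exact ⟨fun h => hzk h.symm, hk⟩)
        Hv (.there _ _ _ _ _ hnv'.1 hlk) hnv'.2
  | icontrol Γ kc e τ τ₁ μ₁ τ₁' μ₂ μ₀ α β γ μi γ' μα μβ hbody hid hc₁ hc₂ ih =>
    first
    | intro Γ₁ Δ kk σ v k' σ' hΓ hk Hv hlk hnv
    | rename_i Γ₁ Δ kk σ v k' σ' hΓ hk Hv hlk hnv
    subst hΓ
    by_cases hzk : kc = kk
    · simp only [subst, if_pos hzk]
      refine .icontrol _ _ _ _ _ _ _ _ _ _ _ _ _ _ _ _ ?_ hid hc₁ hc₂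
      refine transfer_I hbody ((kc, .arrow τ τ₁ μ₁ τ₁' μ₂ α) :: (Γ₁ ++ Δ)) ?_
      intro w τ' _ hl
      exact lookup_remove (Γ₁ := (kc, .arrow τ τ₁ μ₁ τ₁' μ₂ α) :: Γ₁) hl
        (fun _ => by simp [hzk])
    · simp only [subst, if_neg hzk]
      have hnv' : k' ≠ kc ∧ k' ∉ e.vars := by
        simpa [Tm.vars, not_or] using hnv
      refine .icontrol _ _ _ _ _ _ _ _ _ _ _ _ _ _ _ _ ?_ hid hc₁ hc₂
      exact ih ((kc, .arrow τ τ₁ μ₁ τ₁' μ₂ α) :: Γ₁) Δ kk σ v k' σ' rfl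
        (by simp only [List.map_cons, List.mem_cons, not_or]
            exact ⟨fun h => hzk h.symm, hk⟩)
        Hv (.there _ _ _ _ _ hnv'.1 hlk) hnv'.2
  | exp Γ e τ μα α h ih =>
    first
    | intro Γ₁ Δ kk σ v k' σ' hΓ hk Hv hlk hnv
    | rename_i Γ₁ Δ kk σ v k' σ' hΓ hk Hv hlk hnv
    subst hΓ
    exact .exp _ _ _ _ _ (ih _ _ _ _ _ _ _ rfl hk Hv hlk hnv)


/-- **Well-typedness of the shift encoding in the fine-grained λF**: if
    `Γ, k:(τ →p α) ⊢ e : γ @ μi γ′ / • β` with `id-cont-type γ μi γ′`, then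
    for every trail type `μα`,
    `Γ ⊢ F k′. e[k := λx. ⟨k′ x⟩] : τ @ μα α / μα β`, where `k′` is fresh. -/
theorem shift_encoding_well_typed (Γ : FCtx) (k : String) (e : Tm)
    (τ α γ : FTy) (μi : FTr) (γ' β : FTy)
    (ht : HasTypeI ((k, .parrow τ α) :: Γ) e γ μi γ' .empty β)
    (hid : FIdContType γ μi γ')
    (k' x : String) (hfresh : k' ∉ e.vars) (hx : x ≠ k') :
    ∀ μα : FTr,
      HasTypeI Γ
        (.control k'
          (subst e k (.lam x (.prompt (.app (.var k') (.var x))))))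
        τ μα α μα β := by
  intro μα
  have Hv : ∀ Δ' : FCtx, FLookup Δ' k' (FTy.parrow τ α) →
      HasTypeP Δ' (Tm.lam x (.prompt (.app (.var k') (.var x)))) (FTy.parrow τ α) := by
    intro Δ' hl
    refine .pabs _ _ _ _ _ (.pprompt _ _ _ (.papp _ _ _ τ α ?_ ?_))
    · exact .var _ _ _ (.there _ _ _ _ _ (Ne.symm hx) hl)
    · exact .var _ _ _ (.here _ _ _)
  have ht' : HasTypeI ((k, .parrow τ α) :: (k', .parrow τ α) :: Γ) e γ μi γ' .empty β := by
    refine transfer_I ht _ ?_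
    intro z τ' hz hl
    cases hl with
    | here => exact .here _ _ _
    | there _ _ _ _ _ hne hl' =>
      exact .there _ _ _ _ _ hne (.there _ _ _ _ _ (fun h => hfresh (h ▸ hz)) hl')
  have hs := subst_I ht' [] ((k', FTy.parrow τ α) :: Γ) k (FTy.parrow τ α)
    (Tm.lam x (.prompt (.app (.var k') (.var x)))) k' (FTy.parrow τ α) rfl
    (by simp) Hv (.here _ _ _) hfresh
  exact .pcontrol _ _ _ _ _ _ _ _ _ _ hs hid

end LambdaF
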